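/- arXiv:2004.08735 — 3 statements merged into one kernel-verified Lean document; each statement's English description precedes it below -/
import Mathlib

section
/- The equation cos²(π/c) + cos²(π/d) + cos²(π/e) = (5 + √5)/8 has no solutions in integers c, d, e ≥ 3. -/
open Real

lemma aux_cos_lb (n : ℤ) (hn : 3 ≤ n) : (1:ℝ)/2 ≤ Real.cos (π / n) := by
  have h3 : (3:ℝ) ≤ (n:ℝ) := by exact_mod_cast hn
  have hn0 : (0:ℝ) < (n:ℝ) := by linarith
  have hle : π / n ≤ π / 3 := by
    apply div_le_div_of_nonneg_left pi_pos.le (by norm_num) h3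
  have h0 : 0 ≤ π / n := div_nonneg pi_pos.le hn0.le
  have := Real.cos_le_cos_of_nonneg_of_le_pi h0 (by linarith [pi_pos] : π / 3 ≤ π) hle
  rw [Real.cos_pi_div_three] at this
  linarith

lemma aux_cos4_lb (n : ℤ) (hn : 4 ≤ n) : (1:ℝ)/2 ≤ Real.cos (π / n) ^ 2 := by
  have h3 : (4:ℝ) ≤ (n:ℝ) := by exact_mod_cast hn
  have hn0 : (0:ℝ) < (n:ℝ) := by linarith
  have hle : π / n ≤ π / 4 := by
    apply div_le_div_of_nonneg_left pi_pos.le (by norm_num) h3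
  have h0 : 0 ≤ π / n := div_nonneg pi_pos.le hn0.le
  have hc := Real.cos_le_cos_of_nonneg_of_le_pi h0 (by linarith [pi_pos] : π / 4 ≤ π) hle
  rw [Real.cos_pi_div_four] at hc
  have h2 : (0:ℝ) ≤ Real.sqrt 2 / 2 := by positivity
  have hsq : (Real.sqrt 2 / 2) ^ 2 ≤ Real.cos (π / n) ^ 2 := by
    apply pow_le_pow_left₀ h2 hc
  have : (Real.sqrt 2 / 2) ^ 2 = 1/2 := by
    rw [div_pow, Real.sq_sqrt (by norm_num : (0:ℝ) ≤ 2)]; norm_num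
  linarith

theorem cos_sq_three_sum_ne_golden (c d e : ℤ) (hc : 3 ≤ c) (hd : 3 ≤ d) (he : 3 ≤ e) :
    Real.cos (π / c) ^ 2 + Real.cos (π / d) ^ 2 + Real.cos (π / e) ^ 2 ≠
      (5 + Real.sqrt 5) / 8 := by
  intro h
  have hs5 : Real.sqrt 5 ^ 2 = 5 := Real.sq_sqrt (by norm_num)
  have hs5n : 0 ≤ Real.sqrt 5 := Real.sqrt_nonneg 5
  have h5lt : Real.sqrt 5 < 3 := by nlinarith
  have h5gt : 1 < Real.sqrt 5 := by nlinarith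
  have qc : (1:ℝ)/4 ≤ Real.cos (π / c) ^ 2 := by nlinarith [aux_cos_lb c hc]
  have qd : (1:ℝ)/4 ≤ Real.cos (π / d) ^ 2 := by nlinarith [aux_cos_lb d hd]
  have qe : (1:ℝ)/4 ≤ Real.cos (π / e) ^ 2 := by nlinarith [aux_cos_lb e he]
  rcases eq_or_lt_of_le hc with hc3 | hc4
  · rcases eq_or_lt_of_le hd with hd3 | hd4
    · rcases eq_or_lt_of_le he with he3 | he4
      · subst hc3; subst hd3; subst he3
        rw [show ((3:ℤ):ℝ) = (3:ℝ) by norm_num, Real.cos_pi_div_three] at h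
        nlinarith
      · have := aux_cos4_lb e he4
        linarith
    · have := aux_cos4_lb d hd4
      linarith
  · have := aux_cos4_lb c hc4
    linarith
end

section
/- If a, b are positive real numbers with a ≤ b, a² + b² = (5 + √5)/2, and a = 2cos(π/m), b = 2cos(π/n) for integers m, n ≥ 3, then a = 1 and b = (1 + √5)/2. -/
open Real

theorem fpdim_rank_two_component (a b : ℝ) (ha : 0 < a) (hb : 0 < b) (hab : a ≤ b)
    (hsum : a ^ 2 + b ^ 2 = (5 + Real.sqrt 5) / 2)
    (hm : ∃ m : ℤ, 3 ≤ m ∧ a = 2 * Real.cos (π / m))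
    (hn : ∃ n : ℤ, 3 ≤ n ∧ b = 2 * Real.cos (π / n)) :
    a = 1 ∧ b = (1 + Real.sqrt 5) / 2 := by
  obtain ⟨m, hm3, hma⟩ := hm
  have hs5 : Real.sqrt 5 < 3 := by
    nlinarith [Real.sq_sqrt (show (0:ℝ) ≤ 5 by norm_num), Real.sqrt_nonneg 5]
  have ha2 : a ^ 2 < 2 := by nlinarith
  have haslt : a < Real.sqrt 2 := by
    nlinarith [Real.sq_sqrt (show (0:ℝ) ≤ 2 by norm_num), Real.sqrt_nonneg 2]
  -- show m = 3
  have hm4 : ¬ (4 ≤ m) := by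
    intro h4
    have hmR : (4:ℝ) ≤ (m:ℝ) := by exact_mod_cast h4
    have hmpos : (0:ℝ) < (m:ℝ) := by linarith
    have h1 : π / (m:ℝ) ≤ π / 4 := by gcongr
    have h2 : Real.cos (π / 4) ≤ Real.cos (π / (m:ℝ)) := by
      apply Real.cos_le_cos_of_nonneg_of_le_pi
      · positivity
      · linarith [pi_pos]
      · exact h1
    rw [Real.cos_pi_div_four] at h2
    have : Real.sqrt 2 ≤ a := by rw [hma]; linarith
    linarith
  have hmeq : m = 3 := by omega
  have hacast : ((m:ℝ)) = 3 := by rw [hmeq]; norm_num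
  have ha1 : a = 1 := by
    rw [hma, hacast, Real.cos_pi_div_three]; norm_num
  refine ⟨ha1, ?_⟩
  have hb2 : b ^ 2 = (3 + Real.sqrt 5) / 2 := by rw [ha1] at hsum; linarith
  have key : b ^ 2 = ((1 + Real.sqrt 5) / 2) ^ 2 := by
    rw [hb2]
    have := Real.sq_sqrt (show (0:ℝ) ≤ 5 by norm_num)
    ring_nf
    nlinarith [this]
  have hpos : (0:ℝ) < (1 + Real.sqrt 5) / 2 := by positivity
  nlinarith [key, hpos, hb]
end

section
/- There do not exist positive real numbers a, b, c with a ≤ b ≤ c, each of the form 2cos(π/m) for some integer m ≥ 3, satisfying a² + b² + c² = (5 + √5)/2. -/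
open Real

lemma dim_key (v : ℝ) (hv : ∃ m : ℤ, 3 ≤ m ∧ v = 2 * Real.cos (π / m)) :
    v = 1 ∨ 2 ≤ v ^ 2 := by
  obtain ⟨m, hm, rfl⟩ := hv
  rcases eq_or_lt_of_le hm with h3 | h4
  · left
    rw [← h3]
    norm_num [Real.cos_pi_div_three]
  · right
    have hm4 : (4 : ℝ) ≤ (m : ℝ) := by exact_mod_cast h4
    have hπ : (0:ℝ) < π := Real.pi_pos
    have hle : π / m ≤ π / 4 := by
      apply div_le_div_of_nonneg_left hπ.le (by norm_num) hm4 |>.trans_eq rfl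
    have hpos : 0 ≤ π / m := by positivity
    have hcos : Real.cos (π / 4) ≤ Real.cos (π / m) :=
      Real.cos_le_cos_of_nonneg_of_le_pi hpos
        (by linarith [div_le_self hπ.le (by norm_num : (1:ℝ) ≤ 4)]) hle
    rw [Real.cos_pi_div_four] at hcos
    have h2 : Real.sqrt 2 ≤ 2 * Real.cos (π / m) := by linarith
    have hs : (0:ℝ) ≤ Real.sqrt 2 := Real.sqrt_nonneg 2
    nlinarith [Real.sq_sqrt (by norm_num : (0:ℝ) ≤ 2)]

theorem no_rank_three_component (a b c : ℝ)
    (ha : 0 < a) (hb : 0 < b) (hc : 0 < c) (hab : a ≤ b) (hbc : b ≤ c)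
    (hma : ∃ m : ℤ, 3 ≤ m ∧ a = 2 * Real.cos (π / m))
    (hmb : ∃ m : ℤ, 3 ≤ m ∧ b = 2 * Real.cos (π / m))
    (hmc : ∃ m : ℤ, 3 ≤ m ∧ c = 2 * Real.cos (π / m))
    (hsum : a ^ 2 + b ^ 2 + c ^ 2 = (5 + Real.sqrt 5) / 2) :
    False := by
  have h5 : Real.sqrt 5 ^ 2 = 5 := Real.sq_sqrt (by norm_num)
  have h5lt : Real.sqrt 5 < 3 := by nlinarith [Real.sqrt_nonneg 5]
  have h5gt : 1 < Real.sqrt 5 := by nlinarith [Real.sqrt_nonneg 5]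
  have ka := dim_key a hma
  have kb := dim_key b hmb
  have kc := dim_key c hmc
  have ha1 : 1 ≤ a ^ 2 := by rcases ka with h | h <;> nlinarith
  have hb1 : 1 ≤ b ^ 2 := by rcases kb with h | h <;> nlinarith
  have hc2 : c ^ 2 < 2 := by nlinarith
  have hc1 : c = 1 := by rcases kc with h | h; exact h; linarith
  have hb' : b = 1 := by
    rcases kb with h | h
    · exact h
    · nlinarith
  have ha' : a = 1 := by
    rcases ka with h | h
    · exact h
    · nlinarith
  rw [ha', hb', hc1] at hsum
  nlinarith
end
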